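/- arXiv:1711.01779 — 6 statements merged into one kernel-verified Lean document; each statement's English description precedes it below -/
import Mathlib

section
/- Let (X, μ) be a measure space, δ > 0, φ : X → ℝ a measurable function with ∫_X |φ|^{-δ} dμ < ∞, and f : X → ℝ a measurable function which is essentially bounded. Then ‖f‖_{L²(μ)} ≤ ‖|φ|^{-δ}‖_{L¹(μ)}^{1/(2+δ)} · ‖f‖_{L^∞(μ)}^{2/(2+δ)} · ‖fφ‖_{L²(μ)}^{δ/(2+δ)}, that is, (∫_X f² dμ)^{1/2} ≤ (∫_X |φ|^{-δ} dμ)^{1/(2+δ)} · (ess sup |f|)^{2/(2+δ)} · (∫_X (fφ)² dμ)^{δ/(2(2+δ))}. -/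
open MeasureTheory ENNReal

/-- Weighted interpolation inequality (Lemma 3.8 of the paper, explicit constant):
if `∫ |φ|^{-δ} dμ < ∞` and `f` is essentially bounded, then
`‖f‖_{L²(μ)} ≤ ‖|φ|^{-δ}‖_{L¹(μ)}^{1/(2+δ)} · ‖f‖_{L^∞(μ)}^{2/(2+δ)} · ‖fφ‖_{L²(μ)}^{δ/(2+δ)}`. -/
theorem stmt0 {X : Type*} [MeasurableSpace X] (μ : Measure X) (δ : ℝ) (hδ : 0 < δ)
    (φ f : X → ℝ) (hφ : Measurable φ) (hf : Measurable f)
    (hφint : ∫⁻ x, ((‖φ x‖₊ : ℝ≥0∞)) ^ (-δ) ∂μ < ⊤)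
    (hfb : eLpNorm f ⊤ μ < ⊤) :
    eLpNorm f 2 μ ≤ (∫⁻ x, ((‖φ x‖₊ : ℝ≥0∞)) ^ (-δ) ∂μ) ^ (1 / (2 + δ))
      * (eLpNorm f ⊤ μ) ^ (2 / (2 + δ))
      * (eLpNorm (fun x => f x * φ x) 2 μ) ^ (δ / (2 + δ)) := by
  have hr : (0:ℝ) < 2 + δ := by linarith
  have hrne : (2 + δ) ≠ 0 := ne_of_gt hr
  set F : X → ℝ≥0∞ := fun x => (‖f x‖₊ : ℝ≥0∞) with hF_def
  set Φ : X → ℝ≥0∞ := fun x => (‖φ x‖₊ : ℝ≥0∞) with hΦ_def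
  have hF : Measurable F := hf.nnnorm.coe_nnreal_ennreal
  have hΦ : Measurable Φ := hφ.nnnorm.coe_nnreal_ennreal
  set M : ℝ≥0∞ := eLpNorm f ⊤ μ with hM_def
  set A : ℝ≥0∞ := ∫⁻ x, Φ x ^ (-δ) ∂μ with hA_def
  set B2 : ℝ≥0∞ := ∫⁻ x, (F x * Φ x) ^ (2:ℝ) ∂μ with hB2_def
  -- a.e. Φ ≠ 0
  have hΦne : ∀ᵐ x ∂μ, Φ x ≠ 0 := by
    have := ae_lt_top (hΦ.pow_const (-δ)) hφint.ne
    filter_upwards [this] with x hx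
    intro h0
    rw [h0, ENNReal.zero_rpow_of_neg (by linarith)] at hx
    exact absurd hx (lt_irrefl _)
  have hFle : ∀ᵐ x ∂μ, F x ≤ M := by
    rw [hM_def, eLpNorm_exponent_top]
    exact ae_le_eLpNormEssSup
  -- pointwise a.e. bound
  have hptwise : ∀ᵐ x ∂μ, F x ^ (2:ℝ) ≤
      M ^ (4/(2+δ)) * ((F x * Φ x) ^ (2*δ/(2+δ)) * Φ x ^ (-(2*δ/(2+δ)))) := by
    filter_upwards [hΦne, hFle] with x hx0 hxM
    have hΦtop : Φ x ≠ ⊤ := coe_ne_top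
    have he : (0:ℝ) ≤ 2*δ/(2+δ) := by positivity
    have hΦpos : 0 < Φ x := pos_iff_ne_zero.mpr hx0
    have hne0 : Φ x ^ (2*δ/(2+δ)) ≠ 0 := (ENNReal.rpow_pos hΦpos hΦtop).ne'
    have hnetop : Φ x ^ (2*δ/(2+δ)) ≠ ⊤ := ENNReal.rpow_ne_top_of_nonneg he hΦtop
    have h1 : (F x * Φ x) ^ (2*δ/(2+δ)) * Φ x ^ (-(2*δ/(2+δ)))
        = F x ^ (2*δ/(2+δ)) := by
      rw [ENNReal.mul_rpow_of_nonneg _ _ he, ENNReal.rpow_neg, mul_assoc,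
        ENNReal.mul_inv_cancel hne0 hnetop, mul_one]
    rw [h1]
    have h2 : F x ^ (2:ℝ) = F x ^ (4/(2+δ)) * F x ^ (2*δ/(2+δ)) := by
      rw [← ENNReal.rpow_add_of_nonneg _ _ (by positivity) he]
      congr 1
      field_simp
      ring
    rw [h2]
    exact mul_le_mul_left (ENNReal.rpow_le_rpow hxM (by positivity)) _
  -- integrate
  have hint : ∫⁻ x, F x ^ (2:ℝ) ∂μ ≤
      M ^ (4/(2+δ)) * (B2 ^ (δ/(2+δ)) * A ^ (2/(2+δ))) := by
    calc ∫⁻ x, F x ^ (2:ℝ) ∂μ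
        ≤ ∫⁻ x, M ^ (4/(2+δ)) * ((F x * Φ x) ^ (2*δ/(2+δ)) * Φ x ^ (-(2*δ/(2+δ)))) ∂μ :=
          lintegral_mono_ae hptwise
      _ = M ^ (4/(2+δ)) * ∫⁻ x, (F x * Φ x) ^ (2*δ/(2+δ)) * Φ x ^ (-(2*δ/(2+δ))) ∂μ :=
          lintegral_const_mul _ (((hF.mul hΦ).pow_const _).mul (hΦ.pow_const _))
      _ ≤ M ^ (4/(2+δ)) * (B2 ^ (δ/(2+δ)) * A ^ (2/(2+δ))) := by
          gcongr
          have hpq : ((2+δ)/δ).HolderConjugate ((2+δ)/2) := by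
            rw [Real.holderConjugate_iff]
            constructor
            · rw [lt_div_iff₀ hδ]; linarith
            · rw [inv_div, inv_div, ← add_div, div_eq_one_iff_eq hrne]; ring
          have := ENNReal.lintegral_mul_le_Lp_mul_Lq μ hpq
            (f := fun x => (F x * Φ x) ^ (2*δ/(2+δ)))
            (g := fun x => Φ x ^ (-(2*δ/(2+δ))))
            (((hF.mul hΦ).pow_const _).aemeasurable) ((hΦ.pow_const _).aemeasurable)
          simp only [Pi.mul_apply] at this
          refine this.trans_eq ?_
          congr 1
          · congr 1
            · apply lintegral_congr; intro x
              rw [← ENNReal.rpow_mul]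
              congr 1
              field_simp
            · rw [one_div_div]
          · congr 1
            · apply lintegral_congr; intro x
              rw [← ENNReal.rpow_mul]
              congr 1
              field_simp
            · rw [one_div_div]
  -- convert eLpNorms
  have hL2 : eLpNorm f 2 μ = (∫⁻ x, F x ^ (2:ℝ) ∂μ) ^ (1/(2:ℝ)) := by
    rw [eLpNorm_eq_lintegral_rpow_enorm_toReal (by norm_num) (by norm_num)]
    norm_num
    rfl
  have hL2' : eLpNorm (fun x => f x * φ x) 2 μ = B2 ^ (1/(2:ℝ)) := by
    rw [eLpNorm_eq_lintegral_rpow_enorm_toReal (by norm_num) (by norm_num)]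
    norm_num [hB2_def]
    rfl
  rw [hL2, hL2']
  calc (∫⁻ x, F x ^ (2:ℝ) ∂μ) ^ (1/(2:ℝ))
      ≤ (M ^ (4/(2+δ)) * (B2 ^ (δ/(2+δ)) * A ^ (2/(2+δ)))) ^ (1/(2:ℝ)) :=
        ENNReal.rpow_le_rpow hint (by norm_num)
    _ = A ^ (1/(2+δ)) * M ^ (2/(2+δ)) * (B2 ^ (1/(2:ℝ))) ^ (δ/(2+δ)) := by
        rw [ENNReal.mul_rpow_of_nonneg _ _ (by norm_num),
          ENNReal.mul_rpow_of_nonneg _ _ (by norm_num),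
          ← ENNReal.rpow_mul, ← ENNReal.rpow_mul, ← ENNReal.rpow_mul, ← ENNReal.rpow_mul]
        have e1 : 4/(2+δ) * (1/2) = 2/(2+δ) := by field_simp; ring
        have e2 : δ/(2+δ) * (1/2) = 1/2 * (δ/(2+δ)) := by ring
        have e3 : 2/(2+δ) * (1/2) = 1/(2+δ) := by field_simp
        rw [e1, e2, e3]
        ring
end

section
/- Let Y be a real Banach space, τ > 0, λ : ℝ → ℝ continuously differentiable with λ(0) ≠ 0, and φ : ℝ → Y continuous. Define g(t) = λ(0) φ(t) + ∫_0^t λ'(t-s) φ(s) ds. Then (∫_0^τ ‖φ(t)‖² dt)^{1/2} ≤ (√2 / |λ(0)|) · exp( τ · (∫_0^τ λ'(t)² dt) / λ(0)² ) · (∫_0^τ ‖g(t)‖² dt)^{1/2}. -/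
/-!
Since `λ(0) φ = g - ∫₀ᵗ λ'(t - s) φ(s) ds`, the Cauchy–Schwarz inequality for the convolution
term gives, with `K = ∫₀^τ λ'²`, the pointwise bound
`‖φ(t)‖² ≤ (2 / λ(0)²) ‖g(t)‖² + (2K / λ(0)²) ∫₀ᵗ ‖φ‖²`.
This is a linear differential inequality for `F(t) = ∫₀ᵗ ‖φ‖²`; the integrating factor
`exp(-2Kt / λ(0)²)` (Gronwall) yields `F(τ) ≤ exp(2Kτ / λ(0)²) (2 / λ(0)²) ∫₀^τ ‖g‖²`,
and taking square roots gives the estimate.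
-/

open MeasureTheory intervalIntegral Set Real

theorem Continuous.memLp_restrict_Ioc {E : Type*} [NormedAddCommGroup E] {f : ℝ → E}
    (hf : Continuous f) (p : ENNReal) (a b : ℝ) : MemLp f p (volume.restrict (Ioc a b)) := by
  have : IsFiniteMeasure (volume.restrict (Ioc a b)) :=
    ⟨by rw [Measure.restrict_apply_univ]; exact measure_Ioc_lt_top⟩
  obtain ⟨C, hC⟩ := (isCompact_Icc (a := a) (b := b)).exists_bound_of_continuousOn hf.continuousOn
  refine MemLp.of_bound hf.aestronglyMeasurable C ?_
  filter_upwards [ae_restrict_mem measurableSet_Ioc] with x hx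
  exact hC x (Ioc_subset_Icc_self hx)

theorem intervalIntegral.integral_mul_le_sqrt_mul_sqrt_of_nonneg {f g : ℝ → ℝ}
    (hf : Continuous f) (hg : Continuous g) (hf0 : 0 ≤ f) (hg0 : 0 ≤ g) {a b : ℝ} (hab : a ≤ b) :
    ∫ x in a..b, f x * g x ≤ √(∫ x in a..b, f x ^ 2) * √(∫ x in a..b, g x ^ 2) := by
  have hpq : (2 : ℝ).HolderConjugate 2 := .two_two
  simp only [integral_of_le hab, sqrt_eq_rpow, ← rpow_two]
  exact integral_mul_le_Lp_mul_Lq_of_nonneg hpq (.of_forall hf0) (.of_forall hg0)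
    (hf.memLp_restrict_Ioc _ a b) (hg.memLp_restrict_Ioc _ a b)

section

variable {Y : Type*} [NormedAddCommGroup Y] [NormedSpace ℝ Y]

theorem intervalIntegral.norm_integral_smul_le_sqrt_mul_sqrt {k : ℝ → ℝ} {φ : ℝ → Y}
    (hk : Continuous k) (hφ : Continuous φ) {a b : ℝ} (hab : a ≤ b) :
    ‖∫ x in a..b, k x • φ x‖ ≤ √(∫ x in a..b, k x ^ 2) * √(∫ x in a..b, ‖φ x‖ ^ 2) := by
  calc ‖∫ x in a..b, k x • φ x‖ ≤ ∫ x in a..b, |k x| * ‖φ x‖ := by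
        simpa only [norm_smul, norm_eq_abs] using
          norm_integral_le_integral_norm (f := fun x ↦ k x • φ x) hab
    _ ≤ √(∫ x in a..b, |k x| ^ 2) * √(∫ x in a..b, ‖φ x‖ ^ 2) :=
        integral_mul_le_sqrt_mul_sqrt_of_nonneg hk.abs hφ.norm (fun _ ↦ abs_nonneg _)
          (fun _ ↦ norm_nonneg _) hab
    _ = √(∫ x in a..b, k x ^ 2) * √(∫ x in a..b, ‖φ x‖ ^ 2) := by simp only [sq_abs]

theorem sq_norm_integral_comp_sub_smul_le {k : ℝ → ℝ} {φ : ℝ → Y}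
    (hk : Continuous k) (hφ : Continuous φ) {t τ : ℝ} (ht : t ∈ Icc 0 τ) :
    ‖∫ s in (0 : ℝ)..t, k (t - s) • φ s‖ ^ 2
      ≤ (∫ s in (0 : ℝ)..τ, k s ^ 2) * ∫ s in (0 : ℝ)..t, ‖φ s‖ ^ 2 := by
  have hreflect : ∫ s in (0 : ℝ)..t, k (t - s) ^ 2 = ∫ s in (0 : ℝ)..t, k s ^ 2 := by
    simpa only [sub_self, sub_zero] using
      integral_comp_sub_left (a := 0) (b := t) (fun s ↦ k s ^ 2) t
  have hkernel : ∫ s in (0 : ℝ)..t, k s ^ 2 ≤ ∫ s in (0 : ℝ)..τ, k s ^ 2 :=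
    integral_mono_interval le_rfl ht.1 ht.2 (.of_forall fun _ ↦ sq_nonneg _)
      ((hk.pow 2).intervalIntegrable _ _)
  have hk0 : 0 ≤ ∫ s in (0 : ℝ)..t, k s ^ 2 := integral_nonneg ht.1 fun _ _ ↦ sq_nonneg _
  have hφ0 : 0 ≤ ∫ s in (0 : ℝ)..t, ‖φ s‖ ^ 2 := integral_nonneg ht.1 fun _ _ ↦ sq_nonneg _
  have hCS := norm_integral_smul_le_sqrt_mul_sqrt (k := fun s ↦ k (t - s))
    (hk.comp (continuous_sub_left t)) hφ ht.1
  rw [hreflect, ← sqrt_mul hk0] at hCS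
  calc ‖∫ s in (0 : ℝ)..t, k (t - s) • φ s‖ ^ 2
      ≤ (∫ s in (0 : ℝ)..t, k s ^ 2) * ∫ s in (0 : ℝ)..t, ‖φ s‖ ^ 2 :=
        (le_sqrt (norm_nonneg _) (mul_nonneg hk0 hφ0)).1 hCS
    _ ≤ _ := by gcongr

theorem sq_norm_le_of_eq_smul_add_integral_comp_sub_smul {c : ℝ} (hc : c ≠ 0) {k : ℝ → ℝ}
    {φ g : ℝ → Y} (hk : Continuous k) (hφ : Continuous φ)
    (hg : ∀ t, g t = c • φ t + ∫ s in (0 : ℝ)..t, k (t - s) • φ s) {t τ : ℝ} (ht : t ∈ Icc 0 τ) :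
    ‖φ t‖ ^ 2 ≤ 2 / c ^ 2 * ‖g t‖ ^ 2
      + 2 * (∫ s in (0 : ℝ)..τ, k s ^ 2) / c ^ 2 * ∫ s in (0 : ℝ)..t, ‖φ s‖ ^ 2 := by
  have hI := sq_norm_integral_comp_sub_smul_le hk hφ ht
  have hcφ : c ^ 2 * ‖φ t‖ ^ 2 ≤ 2 * (‖g t‖ ^ 2 + ‖∫ s in (0 : ℝ)..t, k (t - s) • φ s‖ ^ 2) := by
    calc c ^ 2 * ‖φ t‖ ^ 2 = ‖g t - ∫ s in (0 : ℝ)..t, k (t - s) • φ s‖ ^ 2 := by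
          rw [hg, add_sub_cancel_right, norm_smul, mul_pow, norm_eq_abs, sq_abs]
      _ ≤ (‖g t‖ + ‖∫ s in (0 : ℝ)..t, k (t - s) • φ s‖) ^ 2 := by gcongr; exact norm_sub_le _ _
      _ ≤ _ := add_sq_le
  rw [div_mul_eq_mul_div, div_mul_eq_mul_div, ← add_div, le_div_iff₀ (by positivity)]
  linarith

theorem le_exp_mul_integral_of_hasDerivAt_le {F f β : ℝ → ℝ} {a τ : ℝ} (ha : 0 ≤ a)
    (hτ : 0 ≤ τ) (hF : ∀ t, HasDerivAt F (f t) t) (hF0 : F 0 = 0) (hβ : Continuous β)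
    (hβ0 : ∀ t ∈ Icc 0 τ, 0 ≤ β t) (hfβ : ∀ t ∈ Ioo 0 τ, f t ≤ β t + a * F t) :
    F τ ≤ exp (a * τ) * ∫ t in (0 : ℝ)..τ, β t := by
  set w : ℝ → ℝ := fun t ↦ exp (-a * t) * β t
  have hw : Continuous w := by fun_prop
  set H : ℝ → ℝ := fun t ↦ exp (-a * t) * F t - ∫ s in (0 : ℝ)..t, w s
  have hH : ∀ t, HasDerivAt H (exp (-a * t) * (f t - a * F t - β t)) t := by
    intro t
    refine ((((hasDerivAt_id t).const_mul (-a)).exp.mul (hF t)).sub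
      (hw.integral_hasStrictDerivAt 0 t).hasDerivAt).congr_deriv ?_
    simp only [w, id, mul_one]
    ring
  have hanti : AntitoneOn H (Icc 0 τ) := by
    refine antitoneOn_of_hasDerivWithinAt_nonpos (convex_Icc 0 τ)
      (fun t _ ↦ (hH t).continuousAt.continuousWithinAt) (fun t _ ↦ (hH t).hasDerivWithinAt) ?_
    rw [interior_Icc]
    intro t ht
    exact mul_nonpos_of_nonneg_of_nonpos (exp_pos _).le (by linarith [hfβ t ht])
  have hHτ : H τ ≤ H 0 := hanti (left_mem_Icc.2 hτ) (right_mem_Icc.2 hτ) hτ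
  have hw_le : ∫ s in (0 : ℝ)..τ, w s ≤ ∫ s in (0 : ℝ)..τ, β s := by
    refine integral_mono_on hτ (hw.intervalIntegrable _ _) (hβ.intervalIntegrable _ _) ?_
    intro s hs
    exact mul_le_of_le_one_left (hβ0 s hs) (exp_le_one_iff.2 (by nlinarith [hs.1]))
  have hexp : exp (a * τ) * exp (-a * τ) = 1 := by rw [← exp_add]; simp
  simp only [H, hF0, mul_zero, integral_same] at hHτ
  calc F τ = exp (a * τ) * (exp (-a * τ) * F τ) := by rw [← mul_assoc, hexp, one_mul]
    _ ≤ exp (a * τ) * ∫ t in (0 : ℝ)..τ, β t := by gcongr; linarith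

end

theorem stmt6_general {Y : Type*} [NormedAddCommGroup Y] [NormedSpace ℝ Y]
    (τ : ℝ) (hτ : 0 < τ)
    (lam : ℝ → ℝ) (hlam : ContDiff ℝ 1 lam) (hlam0 : lam 0 ≠ 0)
    (φ : ℝ → Y) (hφ : Continuous φ)
    (g : ℝ → Y) (hg : ∀ t, g t = lam 0 • φ t + ∫ s in (0 : ℝ)..t, deriv lam (t - s) • φ s) :
    Real.sqrt (∫ t in (0 : ℝ)..τ, ‖φ t‖ ^ 2)
      ≤ (Real.sqrt 2 / |lam 0|)
          * Real.exp (τ * (∫ t in (0 : ℝ)..τ, (deriv lam t) ^ 2) / (lam 0) ^ 2)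
          * Real.sqrt (∫ t in (0 : ℝ)..τ, ‖g t‖ ^ 2) := by
  set c := lam 0
  set K := ∫ t in (0 : ℝ)..τ, deriv lam t ^ 2
  have hK : 0 ≤ K := integral_nonneg hτ.le fun _ _ ↦ sq_nonneg _
  have hk : Continuous (deriv lam) := hlam.continuous_deriv le_rfl
  have hgc : Continuous g := by
    rw [funext hg]
    exact (hφ.const_smul c).add
      (continuous_parametric_intervalIntegral_of_continuous (by fun_prop) continuous_id)
  have hφ2 : Continuous fun t ↦ ‖φ t‖ ^ 2 := by fun_prop
  have hgronwall : ∫ t in (0 : ℝ)..τ, ‖φ t‖ ^ 2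
      ≤ exp (2 * K / c ^ 2 * τ) * ∫ t in (0 : ℝ)..τ, 2 / c ^ 2 * ‖g t‖ ^ 2 :=
    le_exp_mul_integral_of_hasDerivAt_le (by positivity) hτ.le
      (fun t ↦ (hφ2.integral_hasStrictDerivAt 0 t).hasDerivAt) integral_same (by fun_prop)
      (fun _ _ ↦ by positivity) fun t ht ↦
        sq_norm_le_of_eq_smul_add_integral_comp_sub_smul hlam0 hk hφ hg (Ioo_subset_Icc_self ht)
  calc √(∫ t in (0 : ℝ)..τ, ‖φ t‖ ^ 2)
      ≤ √(exp (2 * K / c ^ 2 * τ) * ∫ t in (0 : ℝ)..τ, 2 / c ^ 2 * ‖g t‖ ^ 2) :=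
        sqrt_le_sqrt hgronwall
    _ = √((√2 / |c| * exp (τ * K / c ^ 2)) ^ 2 * ∫ t in (0 : ℝ)..τ, ‖g t‖ ^ 2) := by
        rw [intervalIntegral.integral_const_mul, mul_pow, div_pow, sq_sqrt zero_le_two, sq_abs,
          ← exp_nat_mul]
        ring_nf
    _ = √2 / |c| * exp (τ * K / c ^ 2) * √(∫ t in (0 : ℝ)..τ, ‖g t‖ ^ 2) := by
        rw [sqrt_mul (sq_nonneg _), sqrt_sq (by positivity)]

/-- Quantitative L² estimate for the Volterra equation of the second kind
(heart of the proof of Theorem 4.1 of the paper): with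
`g(t) = λ(0) φ(t) + ∫_0^t λ'(t-s) φ(s) ds`,
`(∫_0^τ ‖φ‖²)^{1/2} ≤ (√2/|λ(0)|) e^{τ ∫_0^τ λ'² / λ(0)²} (∫_0^τ ‖g‖²)^{1/2}`. -/
theorem stmt6 {Y : Type*} [NormedAddCommGroup Y] [NormedSpace ℝ Y] [CompleteSpace Y]
    (τ : ℝ) (hτ : 0 < τ)
    (lam : ℝ → ℝ) (hlam : ContDiff ℝ 1 lam) (hlam0 : lam 0 ≠ 0)
    (φ : ℝ → Y) (hφ : Continuous φ)
    (g : ℝ → Y) (hg : ∀ t, g t = lam 0 • φ t + ∫ s in (0 : ℝ)..t, deriv lam (t - s) • φ s) :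
    Real.sqrt (∫ t in (0 : ℝ)..τ, ‖φ t‖ ^ 2)
      ≤ (Real.sqrt 2 / |lam 0|)
          * Real.exp (τ * (∫ t in (0 : ℝ)..τ, (deriv lam t) ^ 2) / (lam 0) ^ 2)
          * Real.sqrt (∫ t in (0 : ℝ)..τ, ‖g t‖ ^ 2) :=
  stmt6_general τ hτ lam hlam hlam0 φ hφ g hg
end

section
/- Let Y be a real Banach space, τ > 0, λ : ℝ → ℝ continuously differentiable with λ(0) ≠ 0, and φ : ℝ → Y continuous. Define y(t) = ∫_0^t λ(t-s) φ(s) ds. Then y is differentiable on ℝ and (∫_0^τ ‖y'(t)‖² dt)^{1/2} ≥ (|λ(0)| / √2) · exp( −τ · (∫_0^τ λ'(t)² dt) / λ(0)² ) · (∫_0^τ ‖φ(t)‖² dt)^{1/2}. -/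
/-!
Differentiating under the integral sign gives `y' = λ(0) φ + w` with
`w(t) = ∫_0^t λ'(t - s) φ(s) ds`, and Cauchy–Schwarz gives `‖w(t)‖² ≤ K ∫_0^t ‖φ‖²` for
`t ≤ τ`, where `K = ∫_0^τ λ'²`. Hence `λ(0)² ‖φ(t)‖² ≤ 2 ‖y'(t)‖² + 2 K ∫_0^t ‖φ‖²`, and
Gronwall's lemma in integral form, with rate `c = 2K/λ(0)²`, yields
`e^{-cτ} ∫_0^τ ‖φ‖² ≤ (2/λ(0)²) ∫_0^τ ‖y'‖²`; the constant comes from taking square roots.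
-/

open MeasureTheory intervalIntegral Set Function

section Leibniz

variable {E : Type*} [NormedAddCommGroup E] [NormedSpace ℝ E]
  {F F' : ℝ → ℝ → E}

theorem hasDerivAt_intervalIntegral_of_continuous_deriv (hF : Continuous (uncurry F))
    (hF' : Continuous (uncurry F')) (hderiv : ∀ x s, HasDerivAt (F · s) (F' x s) x)
    (a b x₀ : ℝ) :
    HasDerivAt (fun x => ∫ s in a..b, F x s) (∫ s in a..b, F' x₀ s) x₀ := by
  obtain ⟨M, hM⟩ := ((isCompact_closedBall x₀ 1).prod isCompact_uIcc).exists_bound_of_continuousOn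
    hF'.continuousOn
  refine (hasDerivAt_integral_of_dominated_loc_of_deriv_le (bound := fun _ => M)
    (Metric.closedBall_mem_nhds x₀ one_pos) ?_ ((hF.uncurry_left x₀).intervalIntegrable _ _)
    (hF'.uncurry_left x₀).aestronglyMeasurable ?_ intervalIntegrable_const ?_).2
  · exact .of_forall fun x => (hF.uncurry_left x).aestronglyMeasurable
  · exact .of_forall fun s hs x hx => hM (x, s) ⟨hx, uIoc_subset_uIcc hs⟩
  · exact .of_forall fun s _ x _ => hderiv x s

theorem hasDerivAt_integral_diagonal [CompleteSpace E] (hF : Continuous (uncurry F)) (x₀ : ℝ) :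
    HasDerivAt (fun x => ∫ s in x₀..x, F x s) (F x₀ x₀) x₀ := by
  rw [hasDerivAt_iff_isLittleO, Asymptotics.isLittleO_iff]
  intro ε hε
  obtain ⟨δ, hδ, hF_near⟩ := Metric.continuousAt_iff.1 (hF.continuousAt (x := (x₀, x₀))) ε hε
  filter_upwards [Metric.ball_mem_nhds x₀ hδ] with x hx
  have hclose : ∀ s ∈ uIoc x₀ x, ‖F x s - F x₀ x₀‖ ≤ ε := fun s hs => by
    have hs' : dist s x₀ < δ :=
      (abs_sub_left_of_mem_uIcc (uIoc_subset_uIcc hs)).trans_lt hx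
    simpa [dist_eq_norm] using hF_near (x := (x, s)) (by simpa [Prod.dist_eq] using ⟨hx, hs'⟩) |>.le
  calc ‖(∫ s in x₀..x, F x s) - (∫ s in x₀..x₀, F x₀ s) - (x - x₀) • F x₀ x₀‖
      = ‖∫ s in x₀..x, (F x s - F x₀ x₀)‖ := by
        rw [integral_same, integral_sub ((hF.uncurry_left x).intervalIntegrable _ _)
          intervalIntegrable_const, intervalIntegral.integral_const, sub_zero]
    _ ≤ ε * |x - x₀| := norm_integral_le_of_norm_le_const hclose
    _ = ε * ‖x - x₀‖ := by rw [Real.norm_eq_abs]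

theorem hasDerivAt_integral_of_continuous_deriv [CompleteSpace E] (hF : Continuous (uncurry F))
    (hF' : Continuous (uncurry F')) (hderiv : ∀ x s, HasDerivAt (F · s) (F' x s) x)
    (a x₀ : ℝ) :
    HasDerivAt (fun x => ∫ s in a..x, F x s) (F x₀ x₀ + ∫ s in a..x₀, F' x₀ s) x₀ := by
  have hsplit : (fun x => ∫ s in a..x, F x s)
      = fun x => (∫ s in a..x₀, F x s) + ∫ s in x₀..x, F x s :=
    funext fun x => (integral_add_adjacent_intervals
      ((hF.uncurry_left x).intervalIntegrable _ _)
      ((hF.uncurry_left x).intervalIntegrable _ _)).symm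
  rw [hsplit, add_comm]
  exact (hasDerivAt_intervalIntegral_of_continuous_deriv hF hF' hderiv a x₀ x₀).add
    (hasDerivAt_integral_diagonal hF x₀)

end Leibniz

theorem integral_mul_le_sqrt_mul_sqrt {f g : ℝ → ℝ} {a b : ℝ} (hab : a ≤ b)
    (hf : Continuous f) (hg : Continuous g) (hf0 : 0 ≤ f) (hg0 : 0 ≤ g) :
    ∫ s in a..b, f s * g s ≤ √(∫ s in a..b, f s ^ 2) * √(∫ s in a..b, g s ^ 2) := by
  have memLp_two {h : ℝ → ℝ} (hh : Continuous h) :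
      MemLp h (ENNReal.ofReal 2) (volume.restrict (Ioc a b)) := by
    rw [ENNReal.ofReal_ofNat, memLp_two_iff_integrable_sq hh.aestronglyMeasurable]
    exact (hh.pow 2).integrableOn_Ioc
  simpa only [integral_of_le hab, Real.sqrt_eq_rpow, Real.rpow_two] using
    integral_mul_le_Lp_mul_Lq_of_nonneg .two_two (.of_forall hf0) (.of_forall hg0)
      (memLp_two hf) (memLp_two hg)

theorem exp_neg_mul_integral_le_integral_of_le_add_mul_integral {u g : ℝ → ℝ} {c a b : ℝ}
    (hu : Continuous u) (hg : Continuous g) (hc : 0 ≤ c) (hab : a ≤ b)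
    (hg0 : ∀ t ∈ Icc a b, 0 ≤ g t) (hle : ∀ t ∈ Icc a b, u t ≤ g t + c * ∫ s in a..t, u s) :
    Real.exp (-(c * (b - a))) * ∫ s in a..b, u s ≤ ∫ s in a..b, g s := by
  set H : ℝ → ℝ := fun t => Real.exp (-(c * (t - a))) * (∫ s in a..t, u s) - ∫ s in a..t, g s
  have hH : ∀ t, HasDerivAt H
      (Real.exp (-(c * (t - a))) * (u t - c * ∫ s in a..t, u s) - g t) t := fun t => by
    have hexp : HasDerivAt (fun t => Real.exp (-(c * (t - a))))
        (Real.exp (-(c * (t - a))) * -(c * 1)) t :=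
      (((hasDerivAt_id t).sub_const a).const_mul c).neg.exp
    exact ((hexp.mul (hu.integral_hasStrictDerivAt a t).hasDerivAt).sub
      (hg.integral_hasStrictDerivAt a t).hasDerivAt).congr_deriv (by ring)
  have hH_anti : AntitoneOn H (Icc a b) := by
    have hH_diff : Differentiable ℝ H := fun t => (hH t).differentiableAt
    refine antitoneOn_of_deriv_nonpos (convex_Icc a b) hH_diff.continuous.continuousOn
      hH_diff.differentiableOn fun t ht => ?_
    rw [interior_Icc] at ht
    have ht' : t ∈ Icc a b := Ioo_subset_Icc_self ht
    have hexp_le : Real.exp (-(c * (t - a))) ≤ 1 :=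
      Real.exp_le_one_iff.2 (neg_nonpos.2 (mul_nonneg hc (sub_nonneg.2 ht'.1)))
    rw [(hH t).deriv]
    nlinarith [Real.exp_pos (-(c * (t - a))), hle t ht', hg0 t ht']
  have := hH_anti (left_mem_Icc.2 hab) (right_mem_Icc.2 hab) hab
  simpa [H, sub_nonpos] using this

section Volterra

variable {Y : Type*} [NormedAddCommGroup Y] [NormedSpace ℝ Y] {k : ℝ → ℝ} {φ : ℝ → Y}

noncomputable def volterraConv (k : ℝ → ℝ) (φ : ℝ → Y) (t : ℝ) : Y :=
  ∫ s in (0 : ℝ)..t, k (t - s) • φ s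

theorem continuous_volterraConv (hk : Continuous k) (hφ : Continuous φ) :
    Continuous (volterraConv k φ) :=
  continuous_parametric_intervalIntegral_of_continuous
    ((hk.comp (continuous_fst.sub continuous_snd)).smul (hφ.comp continuous_snd)) continuous_id

theorem hasDerivAt_volterraConv [CompleteSpace Y] (hk : ContDiff ℝ 1 k) (hφ : Continuous φ)
    (t : ℝ) : HasDerivAt (volterraConv k φ) (k 0 • φ t + volterraConv (deriv k) φ t) t := by
  have hsub : Continuous fun p : ℝ × ℝ => p.1 - p.2 := continuous_fst.sub continuous_snd
  have h := hasDerivAt_integral_of_continuous_deriv (F := fun x s => k (x - s) • φ s)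
    (F' := fun x s => deriv k (x - s) • φ s)
    ((hk.continuous.comp hsub).smul (hφ.comp continuous_snd))
    (((hk.continuous_deriv le_rfl).comp hsub).smul (hφ.comp continuous_snd))
    (fun x s => ((hk.differentiable one_ne_zero (x - s)).hasDerivAt.comp_sub_const x s).smul_const
      (φ s)) 0 t
  simp only [sub_self] at h
  exact h

theorem continuous_deriv_volterraConv [CompleteSpace Y] (hk : ContDiff ℝ 1 k)
    (hφ : Continuous φ) : Continuous (deriv (volterraConv k φ)) := by
  rw [funext fun t => (hasDerivAt_volterraConv hk hφ t).deriv]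
  exact (continuous_const.smul hφ).add
    (continuous_volterraConv (hk.continuous_deriv le_rfl) hφ)

theorem norm_volterraConv_sq_le (hk : Continuous k) (hφ : Continuous φ) {t : ℝ} (ht : 0 ≤ t) :
    ‖volterraConv k φ t‖ ^ 2 ≤ (∫ s in (0 : ℝ)..t, k s ^ 2) * ∫ s in (0 : ℝ)..t, ‖φ s‖ ^ 2 := by
  have hreflect : ∫ s in (0 : ℝ)..t, |k (t - s)| ^ 2 = ∫ s in (0 : ℝ)..t, k s ^ 2 := by
    simpa [sq_abs] using integral_comp_sub_left (a := 0) (b := t) (fun s => k s ^ 2) t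
  have hnorm : ‖volterraConv k φ t‖
      ≤ √(∫ s in (0 : ℝ)..t, k s ^ 2) * √(∫ s in (0 : ℝ)..t, ‖φ s‖ ^ 2) :=
    calc ‖volterraConv k φ t‖ ≤ ∫ s in (0 : ℝ)..t, |k (t - s)| * ‖φ s‖ :=
          (intervalIntegral.norm_integral_le_integral_norm ht).trans_eq (by simp [norm_smul])
      _ ≤ _ := hreflect ▸ integral_mul_le_sqrt_mul_sqrt ht
          (hk.comp (continuous_const.sub continuous_id)).abs hφ.norm
          (fun _ => abs_nonneg _) (fun _ => norm_nonneg _)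
  calc _ ≤ (√(∫ s in (0 : ℝ)..t, k s ^ 2) * √(∫ s in (0 : ℝ)..t, ‖φ s‖ ^ 2)) ^ 2 := by
        gcongr
    _ = _ := by
        rw [mul_pow, Real.sq_sqrt (integral_nonneg ht fun _ _ => sq_nonneg _),
          Real.sq_sqrt (integral_nonneg ht fun _ _ => sq_nonneg _)]

theorem sq_mul_norm_sq_le_deriv_volterraConv [CompleteSpace Y] (hk : ContDiff ℝ 1 k)
    (hφ : Continuous φ) {t τ : ℝ} (ht : 0 ≤ t) (htτ : t ≤ τ) :
    k 0 ^ 2 * ‖φ t‖ ^ 2 ≤ 2 * ‖deriv (volterraConv k φ) t‖ ^ 2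
      + 2 * (∫ s in (0 : ℝ)..τ, deriv k s ^ 2) * ∫ s in (0 : ℝ)..t, ‖φ s‖ ^ 2 := by
  have hk' : Continuous (deriv k) := hk.continuous_deriv le_rfl
  set w := volterraConv (deriv k) φ t
  have hw : ‖w‖ ^ 2 ≤ (∫ s in (0 : ℝ)..τ, deriv k s ^ 2) * ∫ s in (0 : ℝ)..t, ‖φ s‖ ^ 2 :=
    (norm_volterraConv_sq_le hk' hφ ht).trans (mul_le_mul_of_nonneg_right
      (integral_mono_interval le_rfl ht htτ (.of_forall fun _ => sq_nonneg _)
        ((hk'.pow 2).intervalIntegrable _ _))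
      (integral_nonneg ht fun _ _ => sq_nonneg _))
  have hsplit : k 0 • φ t = deriv (volterraConv k φ) t - w := by
    rw [(hasDerivAt_volterraConv hk hφ t).deriv]; abel
  calc k 0 ^ 2 * ‖φ t‖ ^ 2 = ‖deriv (volterraConv k φ) t - w‖ ^ 2 := by
        rw [← hsplit, norm_smul, mul_pow, Real.norm_eq_abs, sq_abs]
    _ ≤ (‖deriv (volterraConv k φ) t‖ + ‖w‖) ^ 2 := by gcongr; exact norm_sub_le _ _
    _ ≤ 2 * (‖deriv (volterraConv k φ) t‖ ^ 2 + ‖w‖ ^ 2) := add_sq_le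
    _ ≤ _ := by linarith

end Volterra

/-- Explicit-constant lower bound of Theorem 4.1 of the paper (inequality (isp8)) for the
Volterra convolution `y(t) = ∫_0^t λ(t-s) φ(s) ds`: `y` is differentiable and
`(∫_0^τ ‖y'‖²)^{1/2} ≥ (|λ(0)|/√2) e^{-τ ∫_0^τ λ'² / λ(0)²} (∫_0^τ ‖φ‖²)^{1/2}`. -/
theorem stmt7 {Y : Type*} [NormedAddCommGroup Y] [NormedSpace ℝ Y] [CompleteSpace Y]
    (τ : ℝ) (hτ : 0 < τ)
    (lam : ℝ → ℝ) (hlam : ContDiff ℝ 1 lam) (hlam0 : lam 0 ≠ 0)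
    (φ : ℝ → Y) (hφ : Continuous φ)
    (y : ℝ → Y) (hy : ∀ t, y t = ∫ s in (0 : ℝ)..t, lam (t - s) • φ s) :
    Differentiable ℝ y ∧
    Real.sqrt (∫ t in (0 : ℝ)..τ, ‖deriv y t‖ ^ 2)
      ≥ (|lam 0| / Real.sqrt 2)
          * Real.exp (-(τ * (∫ t in (0 : ℝ)..τ, (deriv lam t) ^ 2) / (lam 0) ^ 2))
          * Real.sqrt (∫ t in (0 : ℝ)..τ, ‖φ t‖ ^ 2) := by
  obtain rfl : y = volterraConv lam φ := funext hy
  refine ⟨fun t => (hasDerivAt_volterraConv hlam hφ t).differentiableAt, ?_⟩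
  set K := ∫ t in (0 : ℝ)..τ, deriv lam t ^ 2
  set Φ := ∫ t in (0 : ℝ)..τ, ‖φ t‖ ^ 2
  have hlam2 : 0 < lam 0 ^ 2 := by positivity
  have hK : 0 ≤ K := integral_nonneg hτ.le fun _ _ => sq_nonneg _
  have hΦ : 0 ≤ Φ := integral_nonneg hτ.le fun _ _ => sq_nonneg _
  have hpoint : ∀ t ∈ Icc 0 τ, ‖φ t‖ ^ 2 ≤ 2 / lam 0 ^ 2 * ‖deriv (volterraConv lam φ) t‖ ^ 2
      + 2 * K / lam 0 ^ 2 * ∫ s in (0 : ℝ)..t, ‖φ s‖ ^ 2 := fun t ht =>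
    calc ‖φ t‖ ^ 2 = lam 0 ^ 2 * ‖φ t‖ ^ 2 / lam 0 ^ 2 := by field_simp
      _ ≤ _ := div_le_div_of_nonneg_right (sq_mul_norm_sq_le_deriv_volterraConv hlam hφ ht.1 ht.2)
          hlam2.le
      _ = _ := by ring
  have hgron := exp_neg_mul_integral_le_integral_of_le_add_mul_integral
    (u := fun t => ‖φ t‖ ^ 2) (g := fun t => 2 / lam 0 ^ 2 * ‖deriv (volterraConv lam φ) t‖ ^ 2)
    (hφ.norm.pow 2) (continuous_const.mul ((continuous_deriv_volterraConv hlam hφ).norm.pow 2))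
    (by positivity) hτ.le (fun t _ => by positivity) hpoint
  rw [intervalIntegral.integral_const_mul, sub_zero] at hgron
  set A := ∫ t in (0 : ℝ)..τ, ‖deriv (volterraConv lam φ) t‖ ^ 2
  refine Real.le_sqrt_of_sq_le ?_
  calc (|lam 0| / √2 * Real.exp (-(τ * K / lam 0 ^ 2)) * √Φ) ^ 2
      = lam 0 ^ 2 / 2 * (Real.exp (-(2 * K / lam 0 ^ 2 * τ)) * Φ) := by
        rw [mul_pow, mul_pow, div_pow, sq_abs, Real.sq_sqrt zero_le_two,
          Real.sq_sqrt hΦ, ← Real.exp_nat_mul]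
        ring_nf
    _ ≤ lam 0 ^ 2 / 2 * (2 / lam 0 ^ 2 * A) := by gcongr
    _ = A := by field_simp
end

section
/- Let Y be a real Banach space, τ > 0, λ : ℝ → ℝ continuously differentiable with λ(0) ≠ 0, and h : ℝ → Y continuous. Define m(t) = λ(0) h(t) − ∫_t^τ λ'(s-t) h(s) ds. Then (∫_0^τ ‖h(t)‖² dt)^{1/2} ≤ (√2 / |λ(0)|) · exp( τ · (∫_0^τ λ'(t)² dt) / λ(0)² ) · (∫_0^τ ‖m(t)‖² dt)^{1/2}. -/
open MeasureTheory intervalIntegral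

/-- Cauchy–Schwarz for interval integrals of continuous functions. -/
lemma cs_interval {f g : ℝ → ℝ} {a b : ℝ} (hab : a ≤ b) (hf : Continuous f)
    (hg : Continuous g) :
    (∫ t in a..b, f t * g t) ^ 2 ≤ (∫ t in a..b, f t ^ 2) * (∫ t in a..b, g t ^ 2) := by
  set A := ∫ t in a..b, f t ^ 2 with hA
  set B := ∫ t in a..b, f t * g t with hB
  set C := ∫ t in a..b, g t ^ 2 with hC
  have key : ∀ x : ℝ, 0 ≤ A * (x * x) + (2 * B) * x + C := by
    intro x
    have h0 : 0 ≤ ∫ t in a..b, (x * f t + g t) ^ 2 :=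
      intervalIntegral.integral_nonneg hab (fun t _ => sq_nonneg _)
    have e : (fun t => (x * f t + g t) ^ 2)
        = fun t => (x * x) * f t ^ 2 + ((2 * x) * (f t * g t) + g t ^ 2) := by
      funext t; ring
    rw [e] at h0
    rw [intervalIntegral.integral_add, intervalIntegral.integral_add,
        intervalIntegral.integral_const_mul, intervalIntegral.integral_const_mul] at h0
    · rw [hA, hB, hC]; nlinarith [h0]
    · exact (continuous_const.mul (hf.mul hg)).intervalIntegrable a b
    · exact (hg.pow 2).intervalIntegrable a b
    · exact (continuous_const.mul (hf.pow 2)).intervalIntegrable a b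
    · exact ((continuous_const.mul (hf.mul hg)).add (hg.pow 2)).intervalIntegrable a b
  have hd := discrim_le_zero key
  rw [discrim] at hd
  nlinarith [hd]

/-- Backward-in-time Gronwall estimate (inequality (isp13) of the paper): with
`m(t) = λ(0) h(t) - ∫_t^τ λ'(s-t) h(s) ds`,
`(∫_0^τ ‖h‖²)^{1/2} ≤ (√2/|λ(0)|) e^{τ ∫_0^τ λ'² / λ(0)²} (∫_0^τ ‖m‖²)^{1/2}`. -/
theorem stmt9 {Y : Type*} [NormedAddCommGroup Y] [NormedSpace ℝ Y] [CompleteSpace Y]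
    (τ : ℝ) (hτ : 0 < τ)
    (lam : ℝ → ℝ) (hlam : ContDiff ℝ 1 lam) (hlam0 : lam 0 ≠ 0)
    (h : ℝ → Y) (hh : Continuous h)
    (m : ℝ → Y) (hm : ∀ t, m t = lam 0 • h t - ∫ s in t..τ, deriv lam (s - t) • h s) :
    Real.sqrt (∫ t in (0 : ℝ)..τ, ‖h t‖ ^ 2)
      ≤ (Real.sqrt 2 / |lam 0|)
          * Real.exp (τ * (∫ t in (0 : ℝ)..τ, (deriv lam t) ^ 2) / (lam 0) ^ 2)
          * Real.sqrt (∫ t in (0 : ℝ)..τ, ‖m t‖ ^ 2) := by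
  have hld : Continuous (deriv lam) := hlam.continuous_deriv le_rfl
  set c := lam 0 with hc
  have hc2 : (0:ℝ) < c ^ 2 := by positivity
  set L := ∫ t in (0:ℝ)..τ, (deriv lam t) ^ 2 with hLdef
  have hLnn : 0 ≤ L :=
    intervalIntegral.integral_nonneg hτ.le (fun x _ => sq_nonneg _)
  set K := 2 * L / c ^ 2 with hKdef
  have hK : 0 ≤ K := by positivity
  set H : ℝ → ℝ := fun t => ∫ s in t..τ, ‖h s‖ ^ 2 with hHdef
  have hHnn : ∀ t ∈ Set.Icc (0:ℝ) τ, 0 ≤ H t := fun t ht =>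
    intervalIntegral.integral_nonneg ht.2 (fun x _ => sq_nonneg _)
  have hHd : ∀ t, HasDerivAt H (-(‖h t‖ ^ 2)) t := fun t =>
    (intervalIntegral.integral_hasStrictDerivAt_left
      ((hh.norm.pow 2).intervalIntegrable t τ)
      ((hh.norm.pow 2).stronglyMeasurableAtFilter _ _)
      (hh.norm.pow 2).continuousAt).hasDerivAt
  have hHτ : H τ = 0 := intervalIntegral.integral_same
  -- rewrite the convolution-type integral
  have hJeq : ∀ t : ℝ, (∫ s in t..τ, deriv lam (s - t) • h s)
      = ∫ u in (0:ℝ)..(τ - t), deriv lam u • h (u + t) := by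
    intro t
    have e := intervalIntegral.integral_comp_add_right (a := (0:ℝ)) (b := τ - t)
      (f := fun s => deriv lam (s - t) • h s) t
    simp only [zero_add, sub_add_cancel, add_sub_cancel_right] at e
    rw [← e]
  -- continuity of m
  have hmc : Continuous m := by
    have hJc : Continuous (fun t => ∫ u in (0:ℝ)..(τ - t), deriv lam u • h (u + t)) := by
      apply intervalIntegral.continuous_parametric_intervalIntegral_of_continuous
        (f := fun t u => deriv lam u • h (u + t)) (μ := volume)
      · exact (hld.comp continuous_snd).smul (hh.comp (continuous_snd.add continuous_fst))
      · exact continuous_const.sub continuous_id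
    have hmeq : m = fun t => c • h t - ∫ u in (0:ℝ)..(τ - t), deriv lam u • h (u + t) := by
      funext t; rw [hm t, hJeq t]
    rw [hmeq]
    exact (continuous_const.smul hh).sub hJc
  set M : ℝ → ℝ := fun t => ∫ s in (0:ℝ)..t, ‖m s‖ ^ 2 with hMdef
  have hMd : ∀ t, HasDerivAt M (‖m t‖ ^ 2) t := fun t =>
    ((hmc.norm.pow 2).integral_hasStrictDerivAt 0 t).hasDerivAt
  have hM0 : M 0 = 0 := intervalIntegral.integral_same
  have hMτnn : 0 ≤ M τ :=
    intervalIntegral.integral_nonneg hτ.le (fun x _ => sq_nonneg _)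
  -- key pointwise inequality
  have key : ∀ t ∈ Set.Icc (0:ℝ) τ, ‖h t‖ ^ 2 ≤ (2 / c ^ 2) * ‖m t‖ ^ 2 + K * H t := by
    intro t ht
    have ht0 : (0:ℝ) ≤ τ - t := by linarith [ht.2]
    -- bound on the integral term
    have hJ : ‖(∫ s in t..τ, deriv lam (s - t) • h s)‖ ^ 2 ≤ L * H t := by
      rw [hJeq t]
      have h1 : ‖(∫ u in (0:ℝ)..(τ - t), deriv lam u • h (u + t))‖
          ≤ ∫ u in (0:ℝ)..(τ - t), |deriv lam u| * ‖h (u + t)‖ := by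
        have := intervalIntegral.norm_integral_le_integral_norm (μ := volume)
          (f := fun u => deriv lam u • h (u + t)) ht0
        simpa [norm_smul, Real.norm_eq_abs] using this
      have hcs : (∫ u in (0:ℝ)..(τ - t), |deriv lam u| * ‖h (u + t)‖) ^ 2
          ≤ (∫ u in (0:ℝ)..(τ - t), |deriv lam u| ^ 2)
            * (∫ u in (0:ℝ)..(τ - t), ‖h (u + t)‖ ^ 2) :=
        cs_interval ht0 (continuous_abs.comp hld)
          (continuous_norm.comp (hh.comp (continuous_id.add continuous_const)))
      have habs : (∫ u in (0:ℝ)..(τ - t), |deriv lam u| ^ 2)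
          = ∫ u in (0:ℝ)..(τ - t), (deriv lam u) ^ 2 := by
        simp [sq_abs]
      have hsub : (∫ u in (0:ℝ)..(τ - t), (deriv lam u) ^ 2) ≤ L := by
        rw [hLdef]
        apply intervalIntegral.integral_mono_interval le_rfl ht0 (by linarith [ht.1])
        · exact Filter.Eventually.of_forall (fun x => sq_nonneg _)
        · exact (hld.pow 2).intervalIntegrable 0 τ
      have hHt : (∫ u in (0:ℝ)..(τ - t), ‖h (u + t)‖ ^ 2) = H t := by
        have e := intervalIntegral.integral_comp_add_right (a := (0:ℝ)) (b := τ - t)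
          (f := fun s => ‖h s‖ ^ 2) t
        simp only [zero_add, sub_add_cancel, add_sub_cancel_right] at e
        rw [e, hHdef]
      have hInn : 0 ≤ ∫ u in (0:ℝ)..(τ - t), |deriv lam u| * ‖h (u + t)‖ :=
        intervalIntegral.integral_nonneg ht0
          (fun x _ => mul_nonneg (abs_nonneg _) (norm_nonneg _))
      have hHtnn : 0 ≤ H t := hHnn t ht
      nlinarith [norm_nonneg (∫ u in (0:ℝ)..(τ - t), deriv lam u • h (u + t)), hcs,
        habs ▸ hcs]
    -- combine
    have hsum : c • h t = m t + (∫ s in t..τ, deriv lam (s - t) • h s) := by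
      rw [hm t]; abel
    have h2 : |c| * ‖h t‖ ≤ ‖m t‖ + ‖(∫ s in t..τ, deriv lam (s - t) • h s)‖ := by
      calc |c| * ‖h t‖ = ‖c • h t‖ := by rw [norm_smul, Real.norm_eq_abs]
        _ = ‖m t + (∫ s in t..τ, deriv lam (s - t) • h s)‖ := by rw [← hsum]
        _ ≤ _ := norm_add_le _ _
    have hsq : c ^ 2 * ‖h t‖ ^ 2 ≤ 2 * ‖m t‖ ^ 2 + 2 * (L * H t) := by
      nlinarith [mul_self_nonneg (‖m t‖ - ‖(∫ s in t..τ, deriv lam (s - t) • h s)‖),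
        mul_self_le_mul_self (mul_nonneg (abs_nonneg c) (norm_nonneg (h t))) h2,
        sq_abs c, hJ]
    rw [hKdef]
    rw [div_mul_eq_mul_div, div_mul_eq_mul_div, ← add_div, le_div_iff₀ hc2]
    nlinarith [hsq]
  -- the auxiliary function and its monotonicity
  set φ : ℝ → ℝ := fun t => Real.exp (K * t) * H t + (2 / c ^ 2) * Real.exp (K * τ) * M t
    with hφdef
  have hφd : ∀ t, HasDerivAt φ
      (K * Real.exp (K * t) * H t + Real.exp (K * t) * (-(‖h t‖ ^ 2))
        + (2 / c ^ 2) * Real.exp (K * τ) * ‖m t‖ ^ 2) t := by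
    intro t
    have e1 : HasDerivAt (fun t => Real.exp (K * t)) (K * Real.exp (K * t)) t := by
      have h1 : HasDerivAt (fun t : ℝ => K * t) K t := by
        simpa using (hasDerivAt_id t).const_mul K
      have h2 := h1.exp
      convert h2 using 1
      ring
    exact (e1.mul (hHd t)).add ((hMd t).const_mul ((2 / c ^ 2) * Real.exp (K * τ)))
  have hmono : MonotoneOn φ (Set.Icc 0 τ) := by
    apply monotoneOn_of_deriv_nonneg (convex_Icc 0 τ)
    · exact fun t _ => (hφd t).continuousAt.continuousWithinAt
    · exact fun t _ => ((hφd t).differentiableAt).differentiableWithinAt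
    · intro t ht
      rw [interior_Icc] at ht
      rw [(hφd t).deriv]
      have hkey := key t ⟨ht.1.le, ht.2.le⟩
      have he : Real.exp (K * t) ≤ Real.exp (K * τ) :=
        Real.exp_le_exp.2 (by nlinarith [ht.2.le])
      have hHtnn : 0 ≤ H t := hHnn t ⟨ht.1.le, ht.2.le⟩
      have hEpos : (0:ℝ) < Real.exp (K * t) := Real.exp_pos _
      have hdnn : (0:ℝ) ≤ 2 / c ^ 2 := by positivity
      nlinarith [mul_le_mul_of_nonneg_left hkey hEpos.le,
        mul_nonneg (mul_nonneg hdnn (sub_nonneg.2 he)) (sq_nonneg ‖m t‖)]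
  have h0τ : φ 0 ≤ φ τ :=
    hmono (Set.left_mem_Icc.2 hτ.le) (Set.right_mem_Icc.2 hτ.le) hτ.le
  have hbound : H 0 ≤ (2 / c ^ 2) * Real.exp (K * τ) * M τ := by
    have e0 : φ 0 = H 0 := by
      simp [hφdef, hM0, Real.exp_zero]
    have eτ : φ τ = (2 / c ^ 2) * Real.exp (K * τ) * M τ := by
      simp [hφdef, hHτ]
    rw [e0, eτ] at h0τ
    exact h0τ
  -- conclude
  have hRHSnn : 0 ≤ (Real.sqrt 2 / |c|) * Real.exp (τ * L / c ^ 2) * Real.sqrt (M τ) := by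
    positivity
  have hRHSsq : ((Real.sqrt 2 / |c|) * Real.exp (τ * L / c ^ 2) * Real.sqrt (M τ)) ^ 2
      = (2 / c ^ 2) * Real.exp (K * τ) * M τ := by
    rw [mul_pow, mul_pow, div_pow, Real.sq_sqrt (by norm_num : (0:ℝ) ≤ 2),
      Real.sq_sqrt hMτnn, sq_abs]
    have : Real.exp (τ * L / c ^ 2) ^ 2 = Real.exp (K * τ) := by
      rw [sq, ← Real.exp_add]
      congr 1
      rw [hKdef]
      field_simp
      ring
    rw [this]
  calc Real.sqrt (H 0) ≤ Real.sqrt ((2 / c ^ 2) * Real.exp (K * τ) * M τ) :=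
        Real.sqrt_le_sqrt hbound
    _ = (Real.sqrt 2 / |c|) * Real.exp (τ * L / c ^ 2) * Real.sqrt (M τ) := by
        rw [← hRHSsq, Real.sqrt_sq hRHSnn]
end

section
/- Let n ≥ 1 be an integer, c > 0 and ε₀ ≥ 1. There exists a constant C > 0, depending only on n, c and ε₀, with the following property: for all real numbers A ≥ 0 and D ≥ 0 such that A² ≤ s^{1+2/n}/ε + s^{-2/n} + e^{c s^{(n+4)/n}} e^{cε} D² for every s ≥ 1 and every ε ≥ ε₀, one has (i) A = 0 if D = 0, and (ii) A ≤ C ( |log D|^{-1/(4n+1)} + D ) whenever 0 < D and D ≠ 1. -/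
private lemma le_of_sq_le_sq16 {A K : ℝ} (hA : 0 ≤ A) (hK : 0 ≤ K) (h : A^2 ≤ K^2) : A ≤ K := by
  nlinarith [sq_nonneg (A - K), sq_nonneg (A + K)]

set_option maxHeartbeats 800000 in
/-- Two-parameter minimization lemma completing the proof of Theorem 5.7 of the paper:
if `A² ≤ s^{1+2/n}/ε + s^{-2/n} + e^{c s^{(n+4)/n}} e^{cε} D²` for all `s ≥ 1`, `ε ≥ ε₀`,
then `A = 0` when `D = 0`, and `A ≤ C (|log D|^{-1/(4n+1)} + D)` when `0 < D`, `D ≠ 1`,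
for some `C = C(n, c, ε₀) > 0`. -/
theorem stmt16 (n : ℕ) (hn : 1 ≤ n) (c ε₀ : ℝ) (hc : 0 < c) (hε₀ : 1 ≤ ε₀) :
    ∃ C : ℝ, 0 < C ∧
      ∀ A D : ℝ, 0 ≤ A → 0 ≤ D →
        (∀ s ε : ℝ, 1 ≤ s → ε₀ ≤ ε →
          A ^ 2 ≤ s ^ (1 + 2 / (n : ℝ)) / ε + s ^ (-(2 / (n : ℝ)))
            + Real.exp (c * s ^ (((n : ℝ) + 4) / (n : ℝ))) * Real.exp (c * ε) * D ^ 2) →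
        (D = 0 → A = 0) ∧
        (0 < D → D ≠ 1 → A ≤ C * (|Real.log D| ^ (-(1 / (4 * (n : ℝ) + 1))) + D)) := by
  have hN : (1:ℝ) ≤ (n:ℝ) := by exact_mod_cast hn
  have hN0 : (0:ℝ) < (n:ℝ) := by linarith
  have hN4 : (0:ℝ) < (n:ℝ) + 4 := by linarith
  set α : ℝ := 1/(4*(n:ℝ)+1) with hα
  set β : ℝ := 1/((n:ℝ)+4) with hβ
  have hα0 : 0 < α := by positivity
  have hβ0 : 0 < β := by positivity
  have hαβ : α ≤ β := by
    apply one_div_le_one_div_of_le hN4; linarith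
  set M : ℝ := 2 + Real.exp (c*(1+ε₀)) with hM
  have hM0 : 0 < M := by positivity
  set L₀ : ℝ := max 1 (max (2*c) (c*ε₀)) with hL₀
  have hL₀1 : (1:ℝ) ≤ L₀ := le_max_left _ _
  have hL₀0 : (0:ℝ) < L₀ := by linarith
  set C : ℝ := max (Real.sqrt M * L₀ ^ α) (max (Real.sqrt M) (Real.sqrt (3/2 + 1/c) * (2*c) ^ β)) with hC
  have hsM : 0 < Real.sqrt M := Real.sqrt_pos.2 hM0
  have hC0 : 0 < C := lt_max_of_lt_right (lt_max_of_lt_left hsM)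
  refine ⟨C, hC0, ?_⟩
  intro A D hA hD h
  have hbase := h 1 ε₀ le_rfl le_rfl
  rw [Real.one_rpow, Real.one_rpow, Real.one_rpow, mul_one] at hbase
  have hexp : Real.exp c * Real.exp (c * ε₀) = Real.exp (c*(1+ε₀)) := by
    rw [← Real.exp_add]; ring_nf
  have hε₀0 : (0:ℝ) < ε₀ := by linarith
  have h1ε : 1 / ε₀ ≤ 1 := by
    rw [div_le_one hε₀0]; linarith
  constructor
  · -- D = 0 → A = 0
    intro hD0
    subst hD0
    have key : ∀ s : ℝ, 1 ≤ s → A ^ 2 ≤ s ^ (-(2 / (n:ℝ))) := by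
      intro s hs
      have hs0 : (0:ℝ) < s := by linarith
      refine le_of_forall_pos_le_add ?_
      intro δ hδ
      set ε : ℝ := max ε₀ (s ^ (1 + 2/(n:ℝ)) / δ) with hε
      have hε0 : 0 < ε := lt_of_lt_of_le hε₀0 (le_max_left _ _)
      have h2 := h s ε hs (le_max_left _ _)
      have hterm : s ^ (1 + 2/(n:ℝ)) / ε ≤ δ := by
        rw [div_le_iff₀ hε0]
        calc s ^ (1 + 2/(n:ℝ)) = (s ^ (1 + 2/(n:ℝ)) / δ) * δ := by field_simp
          _ ≤ ε * δ := mul_le_mul_of_nonneg_right (le_max_right _ _) hδ.le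
          _ = δ * ε := by ring
      have hz : ((0:ℝ))^2 = 0 := by norm_num
      rw [hz, mul_zero, add_zero] at h2
      linarith
    refine pow_eq_zero_iff (two_ne_zero) |>.1 (le_antisymm ?_ (sq_nonneg A))
    refine le_of_forall_pos_le_add ?_
    intro δ hδ
    set s : ℝ := max 1 ((1/δ) ^ ((n:ℝ)/2)) with hss
    have hs1 : (1:ℝ) ≤ s := le_max_left _ _
    have hs0 : (0:ℝ) < s := by linarith
    have h3 := key s hs1
    have hfin : s ^ (-(2/(n:ℝ))) ≤ δ := by
      have h4 : (1/δ) ≤ s ^ ((2:ℝ)/(n:ℝ)) := by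
        calc (1/δ) = ((1/δ) ^ ((n:ℝ)/2)) ^ ((2:ℝ)/(n:ℝ)) := by
              rw [← Real.rpow_mul (by positivity),
                show (n:ℝ)/2 * (2/(n:ℝ)) = 1 by field_simp, Real.rpow_one]
          _ ≤ s ^ ((2:ℝ)/(n:ℝ)) :=
              Real.rpow_le_rpow (by positivity) (le_max_right _ _) (by positivity)
      rw [Real.rpow_neg hs0.le]
      calc (s ^ ((2:ℝ)/(n:ℝ)))⁻¹ = 1 / (s ^ ((2:ℝ)/(n:ℝ))) := (one_div _).symm
        _ ≤ 1 / (1/δ) := one_div_le_one_div_of_le (by positivity) h4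
        _ = δ := one_div_one_div δ
    linarith
  · intro hD0 hD1
    set L : ℝ := |Real.log D| with hLdef
    have hLnonneg : 0 ≤ L := abs_nonneg _
    rcases lt_or_gt_of_ne hD1 with hDlt | hDgt
    · -- 0 < D < 1
      have hlogneg : Real.log D < 0 := Real.log_neg hD0 hDlt
      have hLeq : L = -Real.log D := abs_of_neg hlogneg
      have hL0 : 0 < L := by rw [hLeq]; linarith
      have hDsq : D ^ 2 ≤ 1 := pow_le_one₀ hD hDlt.le
      have hAM : A ^ 2 ≤ M := by
        calc A ^ 2 ≤ 1/ε₀ + 1 + Real.exp c * Real.exp (c*ε₀) * D^2 := hbase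
          _ ≤ 2 + Real.exp (c*(1+ε₀)) * 1 := by
              rw [hexp]
              have : Real.exp (c*(1+ε₀)) * D^2 ≤ Real.exp (c*(1+ε₀)) * 1 :=
                mul_le_mul_of_nonneg_left hDsq (Real.exp_pos _).le
              linarith
          _ = M := by rw [hM]; ring
      have hAsqrt : A ≤ Real.sqrt M :=
        le_of_sq_le_sq16 hA hsM.le (by rw [Real.sq_sqrt hM0.le]; exact hAM)
      rcases lt_or_ge L L₀ with hLsmall | hLbig
      · have hstep : Real.sqrt M ≤ (Real.sqrt M * L₀ ^ α) * L ^ (-α) := by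
          have h5 : L ^ α ≤ L₀ ^ α := Real.rpow_le_rpow hL0.le hLsmall.le hα0.le
          have h6 : (1:ℝ) ≤ L₀ ^ α * L ^ (-α) := by
            rw [Real.rpow_neg hL0.le, ← div_eq_mul_inv,
              le_div_iff₀ (Real.rpow_pos_of_pos hL0 _), one_mul]
            exact h5
          calc Real.sqrt M = Real.sqrt M * 1 := (mul_one _).symm
            _ ≤ Real.sqrt M * (L₀ ^ α * L ^ (-α)) := mul_le_mul_of_nonneg_left h6 hsM.le
            _ = (Real.sqrt M * L₀ ^ α) * L ^ (-α) := by ring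
        have hCle : Real.sqrt M * L₀ ^ α ≤ C := le_max_left _ _
        have hLα : 0 ≤ L ^ (-α) := Real.rpow_nonneg hL0.le _
        calc A ≤ (Real.sqrt M * L₀ ^ α) * L ^ (-α) := hAsqrt.trans hstep
          _ ≤ C * L ^ (-α) := mul_le_mul_of_nonneg_right hCle hLα
          _ ≤ C * (L ^ (-α) + D) := by
              have : 0 ≤ C * D := mul_nonneg hC0.le hD
              linarith [mul_add C (L ^ (-α)) D]
      · -- big L : optimize
        have h2c : 2*c ≤ L₀ := le_trans (le_max_left _ _) (le_max_right _ _)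
        have hcε : c*ε₀ ≤ L₀ := le_trans (le_max_right _ _) (le_max_right _ _)
        have hL1 : (1:ℝ) ≤ L := le_trans hL₀1 hLbig
        set t : ℝ := L / (2*c) with htdef
        have ht1 : (1:ℝ) ≤ t := by
          rw [htdef, le_div_iff₀ (by positivity), one_mul]; linarith
        have ht0 : (0:ℝ) < t := by linarith
        have hL2ct : L = 2*c*t := by rw [htdef]; field_simp
        set s : ℝ := t ^ ((n:ℝ)/((n:ℝ)+4)) with hsdef
        have hs1 : (1:ℝ) ≤ s := Real.one_le_rpow ht1 (by positivity)
        have hs0 : (0:ℝ) < s := by linarith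
        set ε : ℝ := 2*t with hεdef
        have hεε₀ : ε₀ ≤ ε := by
          have h8 : c * ε₀ ≤ c * (2*t) := by rw [show c*(2*t) = 2*c*t by ring, ← hL2ct]; linarith
          rw [hεdef]; exact le_of_mul_le_mul_left h8 hc
        have hkey := h s ε hs1 hεε₀
        set γ : ℝ := -(2/((n:ℝ)+4)) with hγ
        have htγ0 : 0 < t ^ γ := Real.rpow_pos_of_pos ht0 _
        have e1 : s ^ (1 + 2/(n:ℝ)) = t ^ (γ + 1) := by
          rw [hsdef, ← Real.rpow_mul ht0.le]
          congr 1
          rw [hγ]; field_simp; ring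
        have e2 : s ^ (-(2/(n:ℝ))) = t ^ γ := by
          rw [hsdef, ← Real.rpow_mul ht0.le]
          congr 1
          rw [hγ]; field_simp
        have e3 : s ^ (((n:ℝ)+4)/(n:ℝ)) = t := by
          rw [hsdef, ← Real.rpow_mul ht0.le,
            show (n:ℝ)/((n:ℝ)+4) * (((n:ℝ)+4)/(n:ℝ)) = 1 by field_simp, Real.rpow_one]
        have e4 : D ^ 2 = Real.exp (-(2*L)) := by
          have h11 : Real.exp (-(2*L)) = Real.exp (Real.log D) * Real.exp (Real.log D) := by
            rw [← Real.exp_add, hLeq]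
            congr 1; ring
          rw [h11, Real.exp_log hD0]; ring
        have term1 : s ^ (1 + 2/(n:ℝ)) / ε = t ^ γ / 2 := by
          rw [e1, hεdef, Real.rpow_add ht0, Real.rpow_one]
          field_simp
        have term3 : Real.exp (c * s ^ (((n:ℝ)+4)/(n:ℝ))) * Real.exp (c*ε) * D^2
            ≤ (1/c) * t ^ γ := by
          rw [e3, e4, hεdef, ← Real.exp_add, ← Real.exp_add,
            show c * t + c * (2*t) + -(2*L) = -(c*t) by rw [hL2ct]; ring]
          have hct0 : (0:ℝ) < c*t := by positivity
          have h7 : Real.exp (-(c*t)) ≤ 1/(c*t) := by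
            rw [Real.exp_neg]
            calc (Real.exp (c*t))⁻¹ = 1 / Real.exp (c*t) := (one_div _).symm
              _ ≤ 1/(c*t) := one_div_le_one_div_of_le hct0
                  (by linarith [Real.add_one_le_exp (c*t)])
          have h9 : 1/(c*t) ≤ (1/c) * t ^ γ := by
            have h10 : t ^ (-1:ℝ) ≤ t ^ γ := by
              apply Real.rpow_le_rpow_of_exponent_le ht1
              rw [hγ]
              rw [neg_le_neg_iff, div_le_one hN4]; linarith
            rw [Real.rpow_neg_one] at h10
            calc 1/(c*t) = (1/c) * t⁻¹ := by field_simp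
              _ ≤ (1/c) * t ^ γ := mul_le_mul_of_nonneg_left h10 (by positivity)
          linarith
        have hAt : A ^ 2 ≤ (3/2 + 1/c) * t ^ γ := by
          rw [term1, e2] at hkey
          calc A ^ 2 ≤ t^γ/2 + t^γ + Real.exp (c * s ^ (((n:ℝ)+4)/(n:ℝ))) * Real.exp (c*ε) * D^2 := hkey
            _ ≤ t^γ/2 + t^γ + (1/c) * t^γ := by linarith
            _ = (3/2 + 1/c) * t ^ γ := by ring
        set K : ℝ := Real.sqrt (3/2 + 1/c) * t ^ (γ/2) with hK
        have hc32 : (0:ℝ) < 3/2 + 1/c := by positivity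
        have hK0 : 0 ≤ K := by positivity
        have hKsq : K ^ 2 = (3/2 + 1/c) * t ^ γ := by
          rw [hK, mul_pow, Real.sq_sqrt hc32.le]
          congr 1
          rw [← Real.rpow_natCast (t ^ (γ/2)) 2, ← Real.rpow_mul ht0.le]
          norm_num
        have hAK : A ≤ K := le_of_sq_le_sq16 hA hK0 (by rw [hKsq]; exact hAt)
        have hγ2 : γ/2 = -β := by rw [hγ, hβ]; ring
        have htβ : t ^ (γ/2) = (2*c) ^ β * L ^ (-β) := by
          rw [hγ2, htdef, Real.rpow_neg (by positivity), Real.div_rpow hL0.le (by positivity),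
            inv_div, Real.rpow_neg hL0.le]
          ring
        have hLβα : L ^ (-β) ≤ L ^ (-α) :=
          Real.rpow_le_rpow_of_exponent_le hL1 (neg_le_neg hαβ)
        have hfinal : K ≤ (Real.sqrt (3/2 + 1/c) * (2*c) ^ β) * L ^ (-α) := by
          rw [hK, htβ]
          have : Real.sqrt (3/2+1/c) * ((2*c) ^ β * L ^ (-β))
              ≤ Real.sqrt (3/2+1/c) * ((2*c) ^ β * L ^ (-α)) := by
            apply mul_le_mul_of_nonneg_left _ (Real.sqrt_nonneg _)
            exact mul_le_mul_of_nonneg_left hLβα (Real.rpow_nonneg (by positivity) _)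
          calc Real.sqrt (3/2+1/c) * ((2*c) ^ β * L ^ (-β))
              ≤ Real.sqrt (3/2+1/c) * ((2*c) ^ β * L ^ (-α)) := this
            _ = (Real.sqrt (3/2 + 1/c) * (2*c) ^ β) * L ^ (-α) := by ring
        have hCle : Real.sqrt (3/2 + 1/c) * (2*c) ^ β ≤ C :=
          le_trans (le_max_right _ _) (le_max_right _ _)
        have hLα : 0 ≤ L ^ (-α) := Real.rpow_nonneg hL0.le _
        calc A ≤ (Real.sqrt (3/2 + 1/c) * (2*c) ^ β) * L ^ (-α) := hAK.trans hfinal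
          _ ≤ C * L ^ (-α) := mul_le_mul_of_nonneg_right hCle hLα
          _ ≤ C * (L ^ (-α) + D) := by
              have : 0 ≤ C * D := mul_nonneg hC0.le hD
              linarith [mul_add C (L ^ (-α)) D]
    · -- D > 1
      have hD2 : (1:ℝ) ≤ D ^ 2 := one_le_pow₀ hDgt.le
      have hAM : A ^ 2 ≤ M * D ^ 2 := by
        calc A ^ 2 ≤ 1/ε₀ + 1 + Real.exp c * Real.exp (c*ε₀) * D^2 := hbase
          _ ≤ 2 * D^2 + Real.exp (c*(1+ε₀)) * D^2 := by rw [hexp]; linarith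
          _ = M * D ^ 2 := by rw [hM]; ring
      have hAK : A ≤ Real.sqrt M * D := by
        apply le_of_sq_le_sq16 hA (by positivity)
        rw [mul_pow, Real.sq_sqrt hM0.le]; exact hAM
      have hCle : Real.sqrt M ≤ C := le_trans (le_max_left _ _) (le_max_right _ _)
      have hLα : 0 ≤ L ^ (-α) := Real.rpow_nonneg hLnonneg _
      calc A ≤ Real.sqrt M * D := hAK
        _ ≤ C * D := mul_le_mul_of_nonneg_right hCle hD
        _ ≤ C * (L ^ (-α) + D) := by
            have : 0 ≤ C * L ^ (-α) := mul_nonneg hC0.le hLα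
            linarith [mul_add C (L ^ (-α)) D]
end

section
/- Let δ ∈ (0,1), let a : [0,1] → ℝ be a measurable essentially bounded function, and let φ₀(x) = √2 cos(πx/2). Then ‖a‖_{L²(0,1)} ≤ (1-δ)^{-1/(2+δ)} ‖a‖_{L^∞(0,1)}^{2/(2+δ)} ‖a φ₀‖_{L²(0,1)}^{δ/(2+δ)}. -/
open Real MeasureTheory ENNReal intervalIntegral

/-- Inequality (aaa) in the proof of Theorem 6.2 of the paper: with the weight
`φ₀(x) = √2 cos(πx/2)` on `(0,1)`, for every `δ ∈ (0,1)` and every essentially bounded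
measurable `a`,
`‖a‖_{L²(0,1)} ≤ (1-δ)^{-1/(2+δ)} ‖a‖_{L^∞(0,1)}^{2/(2+δ)} ‖a φ₀‖_{L²(0,1)}^{δ/(2+δ)}`. -/
theorem stmt18 (δ : ℝ) (hδ0 : 0 < δ) (hδ1 : δ < 1)
    (a : ℝ → ℝ) (ha : Measurable a)
    (hab : eLpNorm a ⊤ (volume.restrict (Set.Ioo (0 : ℝ) 1)) < ⊤)
    (φ₀ : ℝ → ℝ) (hφ₀ : ∀ x, φ₀ x = Real.sqrt 2 * Real.cos (π * x / 2)) :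
    eLpNorm a 2 (volume.restrict (Set.Ioo (0 : ℝ) 1))
      ≤ ENNReal.ofReal ((1 - δ) ^ (-(1 / (2 + δ))))
          * (eLpNorm a ⊤ (volume.restrict (Set.Ioo (0 : ℝ) 1))) ^ (2 / (2 + δ))
          * (eLpNorm (fun x => a x * φ₀ x) 2 (volume.restrict (Set.Ioo (0 : ℝ) 1)))
            ^ (δ / (2 + δ)) := by
  have hδ2 : (0:ℝ) < 2 + δ := by linarith
  set μ := volume.restrict (Set.Ioo (0 : ℝ) 1) with hμdef
  set M := eLpNorm a ⊤ μ with hMdef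
  have hMne : M ≠ ⊤ := hab.ne
  -- continuity / positivity of the weight
  have hφeq : φ₀ = fun x => Real.sqrt 2 * Real.cos (π * x / 2) := funext hφ₀
  have hφcont : Continuous φ₀ := by rw [hφeq]; continuity
  have hφlb : ∀ x ∈ Set.Ioo (0:ℝ) 1, 1 - x ≤ φ₀ x := by
    intro x hx
    have hcos : 1 - x ≤ Real.cos (π * x / 2) := by
      have hx0 := hx.1
      have hx1 := hx.2
      have h := Real.one_sub_mul_le_cos (x := π * x / 2)
        (by nlinarith [pi_pos]) (by nlinarith [pi_pos])
      have : 2 / π * (π * x / 2) = x := by field_simp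
      rwa [this] at h
    have hcos0 : 0 ≤ Real.cos (π * x / 2) := le_trans (by linarith [hx.2]) hcos
    have h2 : 1 ≤ Real.sqrt 2 := by
      rw [show (1:ℝ) = Real.sqrt 1 by simp]
      exact Real.sqrt_le_sqrt (by norm_num)
    calc 1 - x ≤ Real.cos (π * x / 2) := hcos
      _ = 1 * Real.cos (π * x / 2) := (one_mul _).symm
      _ ≤ Real.sqrt 2 * Real.cos (π * x / 2) := by gcongr
      _ = φ₀ x := (hφ₀ x).symm
  have hφpos : ∀ x ∈ Set.Ioo (0:ℝ) 1, 0 < φ₀ x := fun x hx =>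
    lt_of_lt_of_le (by linarith [hx.2]) (hφlb x hx)
  -- abbreviations
  set I := ∫⁻ x, (‖a x‖₊ : ℝ≥0∞) ^ (2:ℝ) ∂μ with hIdef
  set J := ∫⁻ x, (‖a x * φ₀ x‖₊ : ℝ≥0∞) ^ (2:ℝ) ∂μ with hJdef
  set g : ℝ → ℝ≥0∞ := fun x => (ENNReal.ofReal (φ₀ x)) ^ (-δ) with hgdef
  have hGmeas : Measurable fun x => (‖a x * φ₀ x‖₊ : ℝ≥0∞) := (ha.mul hφcont.measurable).nnnorm.coe_nnreal_ennreal
  have hgmeas : Measurable g := (ENNReal.measurable_ofReal.comp hφcont.measurable).pow_const _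
  have hFM : ∀ᵐ x ∂μ, (‖a x‖₊ : ℝ≥0∞) ≤ M := by
    rw [hMdef, eLpNorm_exponent_top]
    exact enorm_ae_le_eLpNormEssSup a μ
  -- pointwise inequality
  have hpt : ∀ᵐ x ∂μ, (‖a x‖₊ : ℝ≥0∞) ^ (2:ℝ)
      ≤ M ^ (4/(2+δ)) * ((((‖a x * φ₀ x‖₊ : ℝ≥0∞) ^ (2:ℝ)) ^ (δ/(2+δ))) * (g x) ^ (2/(2+δ))) := by
    filter_upwards [hFM, ae_restrict_mem measurableSet_Ioo] with x hxM hx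
    have hφx : 0 < φ₀ x := hφpos x hx
    set t : ℝ≥0∞ := (‖a x‖₊ : ℝ≥0∞) with htdef
    set c : ℝ≥0∞ := ENNReal.ofReal (φ₀ x) with hcdef
    have hc0 : c ≠ 0 := by simp [hcdef, ENNReal.ofReal_eq_zero, not_le, hφx]
    have hctop : c ≠ ⊤ := ENNReal.ofReal_ne_top
    have hGc : (‖a x * φ₀ x‖₊ : ℝ≥0∞) = t * c := by
      rw [nnnorm_mul, ENNReal.coe_mul, ← enorm_eq_nnnorm (φ₀ x), Real.enorm_eq_ofReal hφx.le]
    rcases eq_or_ne t 0 with ht0 | ht0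
    · rw [ht0, ENNReal.zero_rpow_of_pos (by norm_num)]
      exact zero_le
    · have httop : t ≠ ⊤ := ENNReal.coe_ne_top
      have key : (((t*c) ^ (2:ℝ)) ^ (δ/(2+δ))) * (c ^ (-δ)) ^ (2/(2+δ)) = t ^ (2*(δ/(2+δ))) := by
        rw [← ENNReal.rpow_mul (t*c), ← ENNReal.rpow_mul c,
          ENNReal.mul_rpow_of_nonneg _ _ (by positivity), mul_assoc,
          ← ENNReal.rpow_add _ _ hc0 hctop,
          show 2*(δ/(2+δ)) + (-δ)*(2/(2+δ)) = 0 by ring, ENNReal.rpow_zero, mul_one]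
      rw [hGc, hgdef, key]
      have ht2 : t ^ (2:ℝ) = t ^ (4/(2+δ)) * t ^ (2*(δ/(2+δ))) := by
        rw [← ENNReal.rpow_add _ _ ht0 httop]
        congr 1
        field_simp
        ring
      rw [ht2]
      exact mul_le_mul_left (ENNReal.rpow_le_rpow hxM (by positivity)) _
  -- integral of the weight
  have hwint : Integrable (fun x : ℝ => (1 - x) ^ (-δ)) μ := by
    have h1 : IntervalIntegrable (fun x:ℝ => x ^ (-δ)) volume 0 1 :=
      intervalIntegrable_rpow' (by linarith)
    have h2 := (h1.comp_sub_left 1).symm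
    norm_num at h2
    exact h2.1.mono_set Set.Ioo_subset_Ioc_self
  have hwval : ∫ x in Set.Ioo (0:ℝ) 1, (1 - x) ^ (-δ) = 1/(1-δ) := by
    rw [← integral_Ioc_eq_integral_Ioo, ← integral_of_le zero_le_one]
    have := integral_comp_sub_left (fun x:ℝ => x ^ (-δ)) 1 (a := 0) (b := 1)
    norm_num at this
    rw [this, integral_rpow (Or.inl (by linarith))]
    rw [Real.one_rpow, Real.zero_rpow (by linarith)]
    ring_nf
  have hgint : ∫⁻ x, g x ∂μ ≤ ENNReal.ofReal (1/(1-δ)) := by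
    have hle : ∀ᵐ x ∂μ, g x ≤ ENNReal.ofReal ((1 - x) ^ (-δ)) := by
      filter_upwards [ae_restrict_mem measurableSet_Ioo] with x hx
      have h1x : (0:ℝ) < 1 - x := by linarith [hx.2]
      simp only [hgdef]
      rw [← ENNReal.ofReal_rpow_of_pos h1x, ENNReal.rpow_neg, ENNReal.rpow_neg,
        ENNReal.inv_le_inv]
      exact ENNReal.rpow_le_rpow (ENNReal.ofReal_le_ofReal (hφlb x hx)) hδ0.le
    calc ∫⁻ x, g x ∂μ ≤ ∫⁻ x, ENNReal.ofReal ((1 - x) ^ (-δ)) ∂μ := lintegral_mono_ae hle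
      _ = ENNReal.ofReal (∫ x, (1 - x) ^ (-δ) ∂μ) := by
          rw [← ofReal_integral_eq_lintegral_ofReal hwint]
          filter_upwards [ae_restrict_mem measurableSet_Ioo] with x hx
          exact Real.rpow_nonneg (by linarith [hx.2]) _
      _ = ENNReal.ofReal (1/(1-δ)) := by rw [hμdef]; rw [hwval]
  -- Hölder
  have hpq : Real.HolderConjugate ((2+δ)/δ) ((2+δ)/2) := by
    rw [Real.holderConjugate_iff]
    constructor
    · rw [lt_div_iff₀ hδ0]; linarith
    · field_simp
      ring
  have hhold : I ≤ M ^ (4/(2+δ)) * (J ^ (δ/(2+δ)) * (ENNReal.ofReal (1/(1-δ))) ^ (2/(2+δ))) := by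
    calc I ≤ ∫⁻ x, M ^ (4/(2+δ)) * ((((‖a x * φ₀ x‖₊ : ℝ≥0∞) ^ (2:ℝ)) ^ (δ/(2+δ))) * (g x) ^ (2/(2+δ))) ∂μ :=
          lintegral_mono_ae hpt
      _ = M ^ (4/(2+δ)) * ∫⁻ x, (((‖a x * φ₀ x‖₊ : ℝ≥0∞) ^ (2:ℝ)) ^ (δ/(2+δ))) * (g x) ^ (2/(2+δ)) ∂μ :=
          lintegral_const_mul' _ _ (ENNReal.rpow_ne_top_of_nonneg (by positivity) hMne)
      _ ≤ M ^ (4/(2+δ)) * (J ^ (δ/(2+δ)) * (∫⁻ x, g x ∂μ) ^ (2/(2+δ))) := by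
          have hH := ENNReal.lintegral_mul_le_Lp_mul_Lq μ hpq
            (f := fun x => ((‖a x * φ₀ x‖₊ : ℝ≥0∞) ^ (2:ℝ)) ^ (δ/(2+δ)))
            (g := fun x => (g x) ^ (2/(2+δ)))
            (((hGmeas.pow_const _).pow_const _).aemeasurable)
            ((hgmeas.pow_const _).aemeasurable)
          simp only [Pi.mul_apply] at hH
          have e1 : ∀ x : ℝ,
              (((‖a x * φ₀ x‖₊ : ℝ≥0∞) ^ (2:ℝ)) ^ (δ/(2+δ))) ^ ((2+δ)/δ)
                = (‖a x * φ₀ x‖₊ : ℝ≥0∞) ^ (2:ℝ) := by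
            intro x
            rw [← ENNReal.rpow_mul, ← ENNReal.rpow_mul]
            congr 1
            field_simp
          have e2 : ∀ x : ℝ, ((g x) ^ (2/(2+δ))) ^ ((2+δ)/2) = g x := by
            intro x
            rw [← ENNReal.rpow_mul]
            rw [show (2/(2+δ)) * ((2+δ)/2) = 1 by field_simp]
            exact ENNReal.rpow_one _
          simp only [e1, e2, one_div_div] at hH
          exact mul_le_mul_right hH _
      _ ≤ M ^ (4/(2+δ)) * (J ^ (δ/(2+δ)) * (ENNReal.ofReal (1/(1-δ))) ^ (2/(2+δ))) := by
          gcongr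
  -- conclude
  have hI2 : eLpNorm a 2 μ = I ^ (1/2 : ℝ) := by
    rw [eLpNorm_eq_lintegral_rpow_enorm_toReal (by norm_num) (by norm_num)]
    norm_num [hIdef, enorm_eq_nnnorm]
  have hJ2 : eLpNorm (fun x => a x * φ₀ x) 2 μ = J ^ (1/2 : ℝ) := by
    rw [eLpNorm_eq_lintegral_rpow_enorm_toReal (by norm_num) (by norm_num)]
    norm_num [hJdef, enorm_eq_nnnorm]
  rw [hI2, hJ2]
  calc I ^ (1/2:ℝ)
      ≤ (M ^ (4/(2+δ)) * (J ^ (δ/(2+δ)) * (ENNReal.ofReal (1/(1-δ))) ^ (2/(2+δ)))) ^ (1/2:ℝ) :=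
        ENNReal.rpow_le_rpow hhold (by norm_num)
    _ = ENNReal.ofReal ((1 - δ) ^ (-(1 / (2 + δ)))) * M ^ (2/(2+δ)) * (J ^ (1/2:ℝ)) ^ (δ/(2+δ)) := by
        rw [ENNReal.mul_rpow_of_nonneg _ _ (by norm_num),
          ENNReal.mul_rpow_of_nonneg _ _ (by norm_num),
          ← ENNReal.rpow_mul M, ← ENNReal.rpow_mul J, ← ENNReal.rpow_mul J,
          ← ENNReal.rpow_mul (ENNReal.ofReal (1/(1-δ)))]
        rw [show (4/(2+δ)) * (1/2:ℝ) = 2/(2+δ) by ring,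
          show (δ/(2+δ)) * (1/2:ℝ) = (1/2)*(δ/(2+δ)) by ring,
          show (2/(2+δ)) * (1/2:ℝ) = 1/(2+δ) by ring]
        rw [ENNReal.ofReal_rpow_of_pos (one_div_pos.mpr (by linarith)),
          show ((1:ℝ)/(1-δ)) ^ ((1:ℝ)/(2+δ)) = (1-δ) ^ (-(1/(2+δ))) by
            rw [Real.rpow_neg (by linarith), one_div, Real.inv_rpow (by linarith)]]
        ring
end
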